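/- The number b_n of permutations of {1,...,n} with no adjacent q-cycle equals the sum over j from 0 to floor(n/q) of (-1)^j * (n-(q-1)j)!/j!. -/

import Mathlib

/-!
Inclusion–exclusion over the set `t` of positions at which an adjacent `q`-cycle is imposed.
Imposing cycles at all `a ∈ t` is possible only when the blocks `[a, a + q)` are pairwise disjoint
and fit into `[0, n)`; the permutation is then fixed on `q * #t` points and free on the others,
giving `(n - q * #t)!` permutations. Placing `j` disjoint blocks of length `q` among `n` positions
amounts to choosing `j` of `n - (q - 1) * j` objects, and
`C(n - (q - 1) j, j) * (n - q j)! = (n - (q - 1) j)! / j!`.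
-/

open Finset

/-- `a` with `a+1`, ..., `a+q-1` (0-indexed) form an adjacent `q`-cycle of `π`. -/
def isAdjCycle (q : ℕ) {n : ℕ} (π : Equiv.Perm (Fin n)) (a : ℕ) : Prop :=
  a + q ≤ n ∧ ∀ i : Fin n, a ≤ i.val → i.val < a + q →
    (π i).val = if i.val = a + q - 1 then a else i.val + 1

instance (q n : ℕ) (π : Equiv.Perm (Fin n)) (a : ℕ) : Decidable (isAdjCycle q π a) := by
  unfold isAdjCycle; infer_instance

/-- The number of adjacent `q`-cycles of a permutation of `{1,...,n}`. -/
def adjCycleCount (q : ℕ) {n : ℕ} (π : Equiv.Perm (Fin n)) : ℕ :=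
  ((Finset.range n).filter (isAdjCycle q π)).card

/-- `numAqC q n k` = number of permutations of `{1,...,n}` with exactly `k` adjacent `q`-cycles. -/
def numAqC (q n k : ℕ) : ℕ :=
  (Finset.univ.filter (fun π : Equiv.Perm (Fin n) => adjCycleCount q π = k)).card

/-- `b q n` = number of permutations of `{1,...,n}` with no adjacent `q`-cycle. -/
def b (q n : ℕ) : ℕ := numAqC q n 0

open Equiv

def IsBlockPacking (q n : ℕ) (t : Finset ℕ) : Prop :=
  ∀ a ∈ t, a + q ≤ n ∧ ∀ b ∈ t, a < b → a + q ≤ b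

instance (q n : ℕ) : DecidablePred (IsBlockPacking q n) := fun _ => by
  unfold IsBlockPacking; infer_instance

def blockUnion (q : ℕ) (t : Finset ℕ) : Finset ℕ :=
  t.biUnion fun a => Ico a (a + q)

def blockPackings (q n j : ℕ) : Finset (Finset ℕ) :=
  {t ∈ (range n).powersetCard j | IsBlockPacking q n t}

section BlockPackings

variable {q n m j : ℕ} {t : Finset ℕ}

theorem IsBlockPacking.eq_of_mem_block (ht : IsBlockPacking q n t) {a b x : ℕ} (ha : a ∈ t)
    (hb : b ∈ t) (hxa : a ≤ x ∧ x < a + q) (hxb : b ≤ x ∧ x < b + q) : a = b := by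
  rcases lt_trichotomy a b with h | h | h
  · have := (ht a ha).2 b hb h; omega
  · exact h
  · have := (ht b hb).2 a ha h; omega

theorem mem_blockUnion {x : ℕ} : x ∈ blockUnion q t ↔ ∃ a ∈ t, a ≤ x ∧ x < a + q := by
  simp only [blockUnion, mem_biUnion, mem_Ico]

theorem IsBlockPacking.card_blockUnion (ht : IsBlockPacking q n t) :
    #(blockUnion q t) = q * #t := by
  rw [blockUnion, card_biUnion, sum_congr rfl fun a _ => Nat.card_Ico a (a + q)]
  · simp [mul_comm]
  · intro a ha b hb hab
    refine disjoint_left.2 fun x hxa hxb => hab ?_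
    rw [mem_Ico] at hxa hxb
    exact ht.eq_of_mem_block ha hb hxa hxb

theorem mem_blockPackings (hq : 1 ≤ q) :
    t ∈ blockPackings q n j ↔ #t = j ∧ IsBlockPacking q n t := by
  simp only [blockPackings, mem_filter, mem_powersetCard, and_assoc]
  refine ⟨fun h => ⟨h.2.1, h.2.2⟩, fun h => ⟨fun a ha => ?_, h⟩⟩
  have := (h.2 a ha).1
  exact mem_range.2 (by omega)

theorem isBlockPacking_succ_iff (hm : m + q = n + 1) (hmt : m ∉ t) :
    IsBlockPacking q (n + 1) t ↔ IsBlockPacking q n t := by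
  refine forall₂_congr fun a ha => and_congr_left fun _ => ?_
  have : a ≠ m := fun h => hmt (h ▸ ha)
  omega

theorem isBlockPacking_insert_iff (hq : 1 ≤ q) (hm : m + q = n) (hmt : m ∉ t) :
    IsBlockPacking q n (insert m t) ↔ IsBlockPacking q m t := by
  constructor
  · intro h a ha
    have ham : a ≠ m := fun h => hmt (h ▸ ha)
    have hfit := (h a (mem_insert_of_mem ha)).1
    have hsep := (h a (mem_insert_of_mem ha)).2
    have hsep' := (h m (mem_insert_self m t)).2 a (mem_insert_of_mem ha)
    refine ⟨?_, fun b hb => hsep b (mem_insert_of_mem hb)⟩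
    rcases lt_or_gt_of_ne ham with hlt | hgt
    · exact hsep m (mem_insert_self m t) hlt
    · have := hsep' hgt; omega
  · intro h a ha
    rw [mem_insert] at ha
    rcases ha with rfl | ha
    · refine ⟨hm.le, fun b hb hab => ?_⟩
      rcases mem_insert.1 hb with rfl | hb
      · omega
      · have := (h b hb).1; omega
    · refine ⟨by have := (h a ha).1; omega, fun b hb hab => ?_⟩
      rcases mem_insert.1 hb with rfl | hb
      · exact (h a ha).1
      · exact (h a ha).2 b hb hab

theorem card_blockPackings_succ_succ (hq : 1 ≤ q) (hqn : q ≤ n + 1) :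
    #(blockPackings q (n + 1) (j + 1)) =
      #(blockPackings q n (j + 1)) + #(blockPackings q (n + 1 - q) j) := by
  -- Split according to whether the last possible block `[n + 1 - q, n + 1)` is used.
  set m := n + 1 - q
  have hm : m + q = n + 1 := by omega
  rw [← card_filter_add_card_filter_not (fun t => m ∈ t), add_comm]
  congr 1
  · congr 1
    ext t
    simp only [mem_filter, mem_blockPackings hq]
    constructor
    · rintro ⟨⟨hcard, ht⟩, hmt⟩
      exact ⟨hcard, (isBlockPacking_succ_iff hm hmt).1 ht⟩
    · rintro ⟨hcard, ht⟩
      have hmt : m ∉ t := fun h => by have := (ht m h).1; omega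
      exact ⟨⟨hcard, (isBlockPacking_succ_iff hm hmt).2 ht⟩, hmt⟩
  · symm
    apply card_nbij' (insert m) (erase · m)
    · intro t ht
      simp only [mem_coe, mem_filter, mem_blockPackings hq] at ht ⊢
      have hmt : m ∉ t := fun h => by have := (ht.2 m h).1; omega
      refine ⟨⟨by rw [card_insert_of_notMem hmt, ht.1], ?_⟩, mem_insert_self m t⟩
      exact (isBlockPacking_insert_iff hq hm hmt).2 ht.2
    · intro t ht
      simp only [mem_coe, mem_filter, mem_blockPackings hq] at ht ⊢
      refine ⟨by rw [card_erase_of_mem ht.2, ht.1.1]; rfl, ?_⟩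
      rw [← isBlockPacking_insert_iff hq hm (notMem_erase m t), insert_erase ht.2]
      exact ht.1.2
    · intro t ht
      simp only [mem_coe, mem_blockPackings hq] at ht
      exact erase_insert fun h => by have := (ht.2 m h).1; omega
    · intro t ht
      simp only [mem_coe, mem_filter] at ht
      exact insert_erase ht.2

theorem choose_succ_sub_mul_succ {c : ℕ} (hcn : c ≤ n) :
    (n + 1 - c * (j + 1)).choose (j + 1) =
      (n - c * (j + 1)).choose (j + 1) + (n - c - c * j).choose j := by
  rw [Nat.mul_succ, Nat.sub_sub, add_comm (c * j)]
  rcases le_or_gt (c + c * j) n with h | h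
  · rw [show n + 1 - (c + c * j) = n - (c + c * j) + 1 by omega, Nat.choose_succ_succ', add_comm]
  · have hj : j ≠ 0 := by rintro rfl; omega
    rw [Nat.sub_eq_zero_of_le h, Nat.sub_eq_zero_of_le h.le, Nat.choose_zero_succ,
      Nat.choose_eq_zero_of_lt (by omega)]

theorem card_blockPackings (hq : 1 ≤ q) :
    #(blockPackings q n j) = (n - (q - 1) * j).choose j := by
  induction n using Nat.strong_induction_on generalizing j with
  | _ n ih =>
  rcases j with _ | j
  · rw [Nat.choose_zero_right, card_eq_one]
    refine ⟨∅, eq_singleton_iff_unique_mem.2 ⟨?_, fun t ht => ?_⟩⟩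
    · simp [mem_blockPackings hq, IsBlockPacking]
    · exact card_eq_zero.1 ((mem_blockPackings hq).1 ht).1
  rcases n with _ | n
  · rw [Nat.zero_sub, Nat.choose_zero_succ, card_eq_zero, blockPackings, range_zero,
      powersetCard_eq_empty.2 (by simp), filter_empty]
  rcases le_or_gt q (n + 1) with hqn | hqn
  · rw [card_blockPackings_succ_succ hq hqn, ih n (by omega), ih (n + 1 - q) (by omega),
      choose_succ_sub_mul_succ (by omega : q - 1 ≤ n)]
    congr 3
    omega
  · have : q - 1 ≤ (q - 1) * (j + 1) := Nat.le_mul_of_pos_right _ j.succ_pos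
    rw [Nat.choose_eq_zero_of_lt (by omega), card_eq_zero, eq_empty_iff_forall_notMem]
    intro t ht
    obtain ⟨hcard, ht⟩ := (mem_blockPackings hq).1 ht
    obtain ⟨a, ha⟩ := card_pos.1 (hcard ▸ j.succ_pos : 0 < #t)
    have := (ht a ha).1
    omega

theorem sub_one_mul_add_self (hq : 1 ≤ q) (j : ℕ) : (q - 1) * j + j = q * j := by
  rw [Nat.sub_one_mul, Nat.sub_add_cancel (Nat.le_mul_of_pos_left j hq)]

theorem cast_choose_mul_factorial (hq : 1 ≤ q) (hj : q * j ≤ n) :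
    (((n - (q - 1) * j).choose j * (n - q * j).factorial : ℕ) : ℚ) =
      (n - (q - 1) * j).factorial / j.factorial := by
  have := sub_one_mul_add_self hq j
  rw [Nat.cast_mul, Nat.cast_choose ℚ (by omega : j ≤ n - (q - 1) * j),
    show n - (q - 1) * j - j = n - q * j by omega]
  field_simp

theorem choose_sub_mul_eq_zero (hq : 1 ≤ q) (hj : n < q * j) :
    (n - (q - 1) * j).choose j = 0 := by
  have := sub_one_mul_add_self hq j
  have hj0 : j ≠ 0 := by rintro rfl; simp at hj
  exact Nat.choose_eq_zero_of_lt (by omega)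

end BlockPackings

theorem Equiv.Perm.card_filter_eqOn {α : Type*} [Fintype α] [DecidableEq α] (σ : Perm α)
    (s : Finset α) [DecidablePred fun π : Perm α => ∀ x ∈ s, π x = σ x] :
    #{π : Perm α | ∀ x ∈ s, π x = σ x} = (Fintype.card α - #s).factorial := by
  calc #{π : Perm α | ∀ x ∈ s, π x = σ x}
      = #{τ : Perm α | ∀ x ∈ s, τ x = x} := by
        apply card_nbij' (σ⁻¹ * ·) (σ * ·) <;> intro π hπ <;>
          simp_all [mul_inv_cancel_left]
    _ = Fintype.card (Perm {x // x ∉ s}) := by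
        rw [← Fintype.card_subtype, Fintype.card_congr (Perm.subtypeEquivSubtypePerm _)]
        simp only [not_not]
    _ = (Fintype.card α - #s).factorial := by
        rw [Fintype.card_perm, Fintype.card_subtype_compl, Fintype.card_coe]

section AdjacentCycles

variable {q n : ℕ} {t : Finset ℕ}

theorem isAdjCycle.add_le_of_lt (hq : 1 ≤ q) {π : Perm (Fin n)} {a b : ℕ}
    (ha : isAdjCycle q π a) (hb : isAdjCycle q π b) (hab : a < b) : a + q ≤ b := by
  by_contra! hba
  have hn := ha.1
  -- `a + q - 1` is the top of the cycle at `a`, but an inner point of the cycle at `b`.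
  let i : Fin n := ⟨a + q - 1, by omega⟩
  have hia := ha.2 i (by simp [i]; omega) (by simp [i]; omega)
  have hib := hb.2 i (by simp [i]; omega) (by simp [i]; omega)
  simp only [i, if_pos, if_neg (show a + q - 1 ≠ b + q - 1 by omega)] at hia hib
  omega

theorem isBlockPacking_of_forall_isAdjCycle (hq : 1 ≤ q) {π : Perm (Fin n)}
    (h : ∀ a ∈ t, isAdjCycle q π a) : IsBlockPacking q n t := fun a ha =>
  ⟨(h a ha).1, fun b hb hab => (h a ha).add_le_of_lt hq (h b hb) hab⟩

theorem IsBlockPacking.exists_perm_forall_isAdjCycle (ht : IsBlockPacking q n t) :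
    ∃ σ : Perm (Fin n), ∀ a ∈ t, isAdjCycle q σ a := by
  -- Extend the partial injection "cyclic successor inside the block"; points are tagged with
  -- their block so that no choice of block is needed.
  let P := {p : Fin n × Fin n // p.1.val ∈ t ∧ p.1.val ≤ p.2.val ∧ p.2.val < p.1.val + q}
  let g : P → Fin n := fun p =>
    ⟨if p.1.2.val = p.1.1 + q - 1 then p.1.1 else p.1.2 + 1, by
      obtain ⟨⟨a, x⟩, ha, hax, hxa⟩ := p
      have := (ht a ha).1
      dsimp only at ha hax hxa ⊢
      split_ifs <;> omega⟩
  have hg : ∀ p : P, p.1.1.val ≤ (g p).val ∧ (g p).val < p.1.1 + q := by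
    rintro ⟨⟨a, x⟩, ha, hax, hxa⟩
    dsimp only [g] at ha hax hxa ⊢
    split_ifs <;> omega
  obtain ⟨σ, hσ⟩ := Perm.exists_extending_pair (fun p : P => p.1.2) g
    (by
      rintro ⟨⟨a, x⟩, ha, hax, hxa⟩ ⟨⟨b, y⟩, hb, hby, hyb⟩ (rfl : x = y)
      obtain rfl : a = b := Fin.ext (ht.eq_of_mem_block ha hb ⟨hax, hxa⟩ ⟨hby, hyb⟩)
      rfl)
    (by
      intro p p' hpp'
      have hab := ht.eq_of_mem_block p.2.1 p'.2.1 (hg p) (hpp' ▸ hg p')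
      obtain ⟨⟨a, x⟩, ha, hax, hxa⟩ := p
      obtain ⟨⟨b, y⟩, hb, hby, hyb⟩ := p'
      obtain rfl : a = b := Fin.ext hab
      have hxy : (if x.val = a + q - 1 then a.val else x + 1) =
          (if y.val = a + q - 1 then a.val else y + 1) := congrArg Fin.val hpp'
      dsimp only at hax hby hxa hyb
      obtain rfl : x = y := Fin.ext (by split_ifs at hxy <;> omega)
      rfl)
  refine ⟨σ, fun a ha => ⟨(ht a ha).1, fun i hai hia => ?_⟩⟩
  have := (ht a ha).1
  exact congrArg Fin.val (hσ ⟨(⟨a, by omega⟩, i), ha, hai, hia⟩)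

theorem forall_isAdjCycle_iff_eqOn {π σ : Perm (Fin n)} (hσ : ∀ a ∈ t, isAdjCycle q σ a) :
    (∀ a ∈ t, isAdjCycle q π a) ↔ ∀ x : Fin n, x.val ∈ blockUnion q t → π x = σ x := by
  simp only [mem_blockUnion]
  constructor
  · rintro hπ x ⟨a, ha, hax, hxa⟩
    exact Fin.ext (((hπ a ha).2 x hax hxa).trans ((hσ a ha).2 x hax hxa).symm)
  · intro h a ha
    refine ⟨(hσ a ha).1, fun x hax hxa => ?_⟩
    rw [h x ⟨a, ha, hax, hxa⟩]
    exact (hσ a ha).2 x hax hxa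

theorem card_forall_isAdjCycle (hq : 1 ≤ q) :
    #{π : Perm (Fin n) | ∀ a ∈ t, isAdjCycle q π a} =
      if IsBlockPacking q n t then (n - q * #t).factorial else 0 := by
  split_ifs with ht
  · obtain ⟨σ, hσ⟩ := ht.exists_perm_forall_isAdjCycle
    have hlt : ∀ x ∈ blockUnion q t, x < n := by
      rintro x hx
      obtain ⟨a, ha, -, hxa⟩ := mem_blockUnion.1 hx
      have := (ht a ha).1
      omega
    set T := (blockUnion q t).attachFin hlt
    have hiff (π : Perm (Fin n)) : (∀ a ∈ t, isAdjCycle q π a) ↔ ∀ x ∈ T, π x = σ x := by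
      simp only [T, mem_attachFin, forall_isAdjCycle_iff_eqOn hσ]
    rw [filter_congr fun π _ => hiff π, Perm.card_filter_eqOn, Fintype.card_fin, card_attachFin,
      ht.card_blockUnion]
  · exact card_eq_zero.2 (filter_eq_empty_iff.2 fun π _ hπ =>
      ht (isBlockPacking_of_forall_isAdjCycle hq hπ))

theorem b_eq_sum_powerset :
    (b q n : ℤ) = ∑ t ∈ (range n).powerset,
      (-1 : ℤ) ^ #t * #{π : Perm (Fin n) | ∀ a ∈ t, isAdjCycle q π a} := by
  let cycleAt (a : ℕ) : Finset (Perm (Fin n)) := {π | isAdjCycle q π a}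
  have hinf (t : Finset ℕ) :
      t.inf cycleAt = ({π | ∀ a ∈ t, isAdjCycle q π a} : Finset (Perm (Fin n))) := by
    ext π
    simp [cycleAt, mem_inf]
  have hb : ({π | adjCycleCount q π = 0} : Finset (Perm (Fin n))) =
      (range n).inf fun a => (cycleAt a)ᶜ := by
    ext π
    simp [cycleAt, adjCycleCount, mem_inf, filter_eq_empty_iff]
  rw [b, numAqC, hb, inclusion_exclusion_card_inf_compl]
  simp only [hinf]

theorem b_eq_sum_choose (hq : 1 ≤ q) :
    (b q n : ℤ) = ∑ j ∈ range (n + 1),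
      (-1 : ℤ) ^ j * ((n - (q - 1) * j).choose j * (n - q * j).factorial : ℕ) := by
  rw [b_eq_sum_powerset, powerset_card_biUnion,
    sum_biUnion fun i _ j _ hij => pairwise_disjoint_powersetCard _ hij, card_range]
  refine sum_congr rfl fun j _ => ?_
  rw [← card_blockPackings hq, blockPackings, card_filter, sum_mul, Nat.cast_sum, mul_sum]
  refine sum_congr rfl fun t ht => ?_
  rw [card_forall_isAdjCycle hq, (mem_powersetCard.1 ht).2]
  split_ifs <;> simp

end AdjacentCycles

theorem stmt5 (q n : ℕ) (hq : 1 ≤ q) :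
    (b q n : ℚ) =
      ∑ j ∈ Finset.range (n / q + 1), (-1 : ℚ) ^ j * ((n - (q - 1) * j).factorial : ℚ) / (j.factorial : ℚ) := by
  have hmem (j : ℕ) : j ∈ range (n / q + 1) ↔ q * j ≤ n := by
    rw [mem_range, Nat.lt_succ_iff, Nat.le_div_iff_mul_le (by omega), mul_comm]
  have hsub : range (n / q + 1) ⊆ range (n + 1) :=
    range_subset_range.2 (Nat.succ_le_succ (Nat.div_le_self n q))
  rw [← Int.cast_natCast, b_eq_sum_choose hq, Int.cast_sum, ← sum_subset hsub]
  · refine sum_congr rfl fun j hj => ?_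
    rw [mul_div_assoc, ← cast_choose_mul_factorial hq ((hmem j).1 hj)]
    push_cast
    rfl
  · intro j _ hj
    rw [hmem, not_le] at hj
    simp [choose_sub_mul_eq_zero hq hj]
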